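/- arXiv:2006.01072 — 3 statements merged into one kernel-verified Lean document; each statement's English description precedes it below -/
import Mathlib

section
/- Let Z₁, …, Z_n be random variables adapted to a filtration such that 0 ≤ Z_i ≤ η almost surely and E[Z_i | Z₁,…,Z_{i−1}] ≤ 1, with η ≥ 1. Then for all t > 0 and ρ ∈ ℝ, Pr[Z₁ + ⋯ + Z_n ≥ ρ] ≤ ((η − 1 + e^{tη})/η)^n · e^{−tρ}. -/
open MeasureTheory

/-- Adversarial-weight concentration: if `Z₁, …, Z_n` are adapted with `0 ≤ Z_i ≤ η` a.s.,
`η ≥ 1`, and conditional expectation at most 1 given the past, then for `t > 0` and `ρ`,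
`Pr[∑ Z_i ≥ ρ] ≤ ((η - 1 + e^{tη})/η)^n · e^{-tρ}`. -/
theorem stmt4 {Ω : Type*} {m0 : MeasurableSpace Ω} (μ : Measure Ω) [IsProbabilityMeasure μ]
    (𝔽 : Filtration ℕ m0) (Z : ℕ → Ω → ℝ) (η : ℝ) (hη : 1 ≤ η)
    (hadapted : Adapted 𝔽 Z)
    (hbound : ∀ i, ∀ᵐ ω ∂μ, 0 ≤ Z i ω ∧ Z i ω ≤ η)
    (hcond : ∀ i, ∀ᵐ ω ∂μ, (μ[Z (i + 1) | 𝔽 i]) ω ≤ 1)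
    (n : ℕ) (t ρ : ℝ) (ht : 0 < t) :
    (μ {ω | ρ ≤ ∑ i ∈ Finset.range n, Z (i + 1) ω}).toReal
      ≤ ((η - 1 + Real.exp (t * η)) / η) ^ n * Real.exp (-t * ρ) := by
  have hη0 : (0:ℝ) < η := lt_of_lt_of_le one_pos hη
  set M : ℝ := (η - 1 + Real.exp (t * η)) / η with hMdef
  set c : ℝ := (Real.exp (t * η) - 1) / η with hcdef
  have hc0 : 0 ≤ c := by
    apply div_nonneg _ hη0.le
    have : (1:ℝ) ≤ Real.exp (t * η) := by
      rw [Real.one_le_exp_iff]; positivity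
    linarith
  have hMc : M = 1 + c := by rw [hMdef, hcdef, one_add_div hη0.ne']; ring
  have hM1 : (1:ℝ) ≤ M := by rw [hMc]; linarith
  have hM0 : (0:ℝ) ≤ M := by linarith
  -- pointwise convexity bound
  have hpt : ∀ z : ℝ, 0 ≤ z → z ≤ η → Real.exp (t * z) ≤ 1 + c * z := by
    intro z hz0 hzη
    have h1 : 0 ≤ 1 - z / η := by
      have : z / η ≤ 1 := (div_le_one hη0).mpr hzη
      linarith
    have h2 : 0 ≤ z / η := div_nonneg hz0 hη0.le
    have hs : (1 - z / η) + z / η = 1 := by ring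
    have := convexOn_exp.2 (Set.mem_univ (0:ℝ)) (Set.mem_univ (t * η)) h1 h2 hs
    simp only [smul_eq_mul, mul_zero, zero_add, Real.exp_zero, mul_one] at this
    have heq : z / η * (t * η) = t * z := by field_simp
    rw [heq] at this
    calc Real.exp (t * z) ≤ (1 - z / η) + z / η * Real.exp (t * η) := this
      _ = 1 + c * z := by rw [hcdef]; field_simp; ring
  -- measurability
  have hZsm : ∀ i, StronglyMeasurable (Z i) := fun i => ((hadapted i).mono (𝔽.le i) le_rfl).stronglyMeasurable
  have hZm : ∀ i, Measurable (Z i) := fun i => (hZsm i).measurable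
  have hZint : ∀ i, Integrable (Z i) μ := by
    intro i
    refine Integrable.mono' (integrable_const η) (hZsm i).aestronglyMeasurable ?_
    filter_upwards [hbound i] with ω ⟨h0, h1⟩
    rw [Real.norm_eq_abs, abs_of_nonneg h0]; exact h1
  have hexpint : ∀ i, Integrable (fun ω => Real.exp (t * Z i ω)) μ := by
    intro i
    refine Integrable.mono' (integrable_const (Real.exp (t * η)))
      (Real.measurable_exp.comp ((hZm i).const_mul t)).aestronglyMeasurable ?_
    filter_upwards [hbound i] with ω ⟨h0, h1⟩
    rw [Real.norm_eq_abs, abs_of_nonneg (Real.exp_pos _).le, Real.exp_le_exp]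
    exact mul_le_mul_of_nonneg_left h1 ht.le
  set S : ℕ → Ω → ℝ := fun n ω => ∑ i ∈ Finset.range n, Z (i + 1) ω with hSdef
  have hSsm : ∀ k, StronglyMeasurable[𝔽 k] (S k) := by
    intro k
    apply Finset.stronglyMeasurable_fun_sum
    intro i hi
    exact ((hadapted (i+1)).mono (𝔽.mono (Finset.mem_range.mp hi)) le_rfl).stronglyMeasurable
  have hSintexp : ∀ k, Integrable (fun ω => Real.exp (t * S k ω)) μ := by
    intro k
    refine Integrable.mono' (integrable_const (Real.exp (t * (k * η))))
      (Real.measurable_exp.comp ((((hSsm k).mono (𝔽.le k)).measurable).const_mul t)).aestronglyMeasurable ?_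
    filter_upwards [ae_all_iff.mpr (fun i => hbound i)] with ω hω
    rw [Real.norm_eq_abs, abs_of_nonneg (Real.exp_pos _).le, Real.exp_le_exp]
    apply mul_le_mul_of_nonneg_left _ ht.le
    calc S k ω ≤ ∑ i ∈ Finset.range k, η :=
          Finset.sum_le_sum fun i _ => (hω (i+1)).2
      _ = k * η := by simp [mul_comm]
  -- conditional bound
  have hcb : ∀ k, ∀ᵐ ω ∂μ, (μ[fun ω => Real.exp (t * Z (k+1) ω) | 𝔽 k]) ω ≤ M := by
    intro k
    have hint1 : Integrable (fun ω => 1 + c * Z (k+1) ω) μ :=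
      (integrable_const 1).add ((hZint (k+1)).const_mul c)
    have hmono : (μ[fun ω => Real.exp (t * Z (k+1) ω) | 𝔽 k])
        ≤ᵐ[μ] (μ[fun ω => 1 + c * Z (k+1) ω | 𝔽 k]) := by
      apply condExp_mono (hexpint (k+1)) hint1
      filter_upwards [hbound (k+1)] with ω ⟨h0, h1⟩
      exact hpt _ h0 h1
    have hsplit : (μ[fun ω => 1 + c * Z (k+1) ω | 𝔽 k])
        =ᵐ[μ] fun ω => 1 + c * (μ[Z (k+1) | 𝔽 k]) ω := by
      have h1 : (μ[fun ω => 1 + c * Z (k+1) ω | 𝔽 k])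
          =ᵐ[μ] (μ[(fun _ => (1:ℝ)) | 𝔽 k]) + (μ[fun ω => c * Z (k+1) ω | 𝔽 k]) :=
        condExp_add (integrable_const 1) ((hZint (k+1)).const_mul c) (𝔽 k)
      have h2 : (μ[(fun _ => (1:ℝ)) | 𝔽 k]) = fun _ => (1:ℝ) := condExp_const (𝔽.le k) 1
      have h3 : (μ[fun ω => c * Z (k+1) ω | 𝔽 k]) =ᵐ[μ] fun ω => c * (μ[Z (k+1) | 𝔽 k]) ω := by
        have := condExp_smul (μ := μ) (m := 𝔽 k) (m₀ := m0) c (Z (k+1))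
        exact this
      filter_upwards [h1, h3] with ω hω1 hω3
      simp only [hω1, Pi.add_apply, h2, hω3]
    filter_upwards [hmono, hsplit, hcond k] with ω h1 h2 h3
    calc (μ[fun ω => Real.exp (t * Z (k+1) ω) | 𝔽 k]) ω
        ≤ (μ[fun ω => 1 + c * Z (k+1) ω | 𝔽 k]) ω := h1
      _ = 1 + c * (μ[Z (k+1) | 𝔽 k]) ω := h2
      _ ≤ 1 + c * 1 := by nlinarith
      _ = M := by rw [hMc]; ring
  -- induction
  have hind : ∀ k, ∫ ω, Real.exp (t * S k ω) ∂μ ≤ M ^ k := by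
    intro k
    induction k with
    | zero => simp [hSdef]
    | succ k ih =>
      set f : Ω → ℝ := fun ω => Real.exp (t * S k ω) with hfdef
      set g : Ω → ℝ := fun ω => Real.exp (t * Z (k+1) ω) with hgdef
      have hfg : (fun ω => Real.exp (t * S (k+1) ω)) = f * g := by
        funext ω
        simp only [hSdef, hfdef, hgdef, Pi.mul_apply]
        rw [Finset.sum_range_succ, mul_add, Real.exp_add]
      have hfgint : Integrable (f * g) μ := by rw [← hfg]; exact hSintexp (k+1)
      have hfm : StronglyMeasurable[𝔽 k] f :=
        (Real.continuous_exp.comp (continuous_const.mul continuous_id)).comp_stronglyMeasurable (hSsm k)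
      have hpull : μ[f * g | 𝔽 k] =ᵐ[μ] f * μ[g | 𝔽 k] :=
        condExp_mul_of_stronglyMeasurable_left hfm hfgint (hexpint (k+1))
      have hf0 : ∀ ω, 0 ≤ f ω := fun ω => (Real.exp_pos _).le
      calc ∫ ω, Real.exp (t * S (k+1) ω) ∂μ
          = ∫ ω, (f * g) ω ∂μ := by rw [hfg]
        _ = ∫ ω, (μ[f * g | 𝔽 k]) ω ∂μ := (integral_condExp (𝔽.le k)).symm
        _ = ∫ ω, (f * μ[g | 𝔽 k]) ω ∂μ := integral_congr_ae hpull
        _ ≤ ∫ ω, f ω * M ∂μ := by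
            apply integral_mono_ae (integrable_condExp.congr hpull) ((hSintexp k).mul_const M)
            filter_upwards [hcb k] with ω hω
            exact mul_le_mul_of_nonneg_left hω (hf0 ω)
        _ = (∫ ω, f ω ∂μ) * M := by rw [integral_mul_const]
        _ ≤ M ^ k * M := mul_le_mul_of_nonneg_right ih hM0
        _ = M ^ (k+1) := by ring
  -- Markov
  have hmgf : ProbabilityTheory.mgf (S n) μ t ≤ M ^ n := hind n
  have := ProbabilityTheory.measure_ge_le_exp_mul_mgf (μ := μ) (X := S n) (t := t) ρ ht.le (hSintexp n)
  calc (μ {ω | ρ ≤ ∑ i ∈ Finset.range n, Z (i + 1) ω}).toReal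
      ≤ Real.exp (-t * ρ) * ProbabilityTheory.mgf (S n) μ t := this
    _ ≤ Real.exp (-t * ρ) * M ^ n := mul_le_mul_of_nonneg_left hmgf (Real.exp_pos _).le
    _ = M ^ n * Real.exp (-t * ρ) := mul_comm _ _
end

section
/- Fix integers d ≥ 0, r₁ < r₂ and a real s > 0. Let (a_r)_{r ∈ ℤ} be nonnegative reals and (S_r)_{r ∈ ℤ} be {0,1}-valued, and suppose that whenever S_r = 1 one has ∑_{j=r−d}^{r} a_j ≥ s. Then ∑_{r=r₁}^{r₂−1} S_r ≤ d + ((d+1)/s) · ∑_{r=r₁−d}^{r₂−1} a_r. -/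
/-- Deterministic window-counting lemma: if every round with `S r = 1` forces total
weight at least `s` in the window `[r-d, r]`, then the number of such rounds in
`[r₁, r₂)` is at most `d + ((d+1)/s) · ∑_{r=r₁-d}^{r₂-1} a_r`. -/
theorem stmt14 (d r₁ r₂ : ℤ) (hd : 0 ≤ d) (hr : r₁ < r₂) (s : ℝ) (hs : 0 < s)
    (a S : ℤ → ℝ) (ha : ∀ r, 0 ≤ a r) (hS : ∀ r, S r = 0 ∨ S r = 1)
    (hwin : ∀ r, S r = 1 → s ≤ ∑ j ∈ Finset.Icc (r - d) r, a j) :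
    ∑ r ∈ Finset.Ico r₁ r₂, S r ≤
      (d : ℝ) + (((d : ℝ) + 1) / s) * ∑ r ∈ Finset.Ico (r₁ - d) r₂, a r := by
  have hT : (0:ℝ) ≤ ∑ r ∈ Finset.Ico (r₁ - d) r₂, a r :=
    Finset.sum_nonneg fun i _ => ha i
  have key : s * ∑ r ∈ Finset.Ico r₁ r₂, S r
      ≤ ((d:ℝ) + 1) * ∑ r ∈ Finset.Ico (r₁ - d) r₂, a r := by
    have h1 : s * ∑ r ∈ Finset.Ico r₁ r₂, S r
        ≤ ∑ r ∈ Finset.Ico r₁ r₂, ∑ j ∈ Finset.Icc (r - d) r, a j := by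
      rw [Finset.mul_sum]
      apply Finset.sum_le_sum
      intro r _
      rcases hS r with h | h
      · rw [h, mul_zero]
        exact Finset.sum_nonneg fun j _ => ha j
      · rw [h, mul_one]
        exact hwin r h
    refine h1.trans ?_
    have hrw : ∀ r ∈ Finset.Ico r₁ r₂, ∑ j ∈ Finset.Icc (r - d) r, a j
        = ∑ j ∈ Finset.Ico (r₁ - d) r₂, if r - d ≤ j ∧ j ≤ r then a j else 0 := by
      intro r hr'
      simp only [Finset.mem_Ico] at hr'
      rw [← Finset.sum_filter]
      congr 1
      ext j
      simp only [Finset.mem_filter, Finset.mem_Ico, Finset.mem_Icc]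
      omega
    rw [Finset.sum_congr rfl hrw, Finset.sum_comm, Finset.mul_sum]
    apply Finset.sum_le_sum
    intro j _
    have hrw2 : ∑ r ∈ Finset.Ico r₁ r₂, (if r - d ≤ j ∧ j ≤ r then a j else 0)
        = ∑ r ∈ (Finset.Ico r₁ r₂).filter (fun r => r - d ≤ j ∧ j ≤ r), a j :=
      (Finset.sum_filter _ _).symm
    rw [hrw2, Finset.sum_const, nsmul_eq_mul]
    have hcard : ((Finset.Ico r₁ r₂).filter (fun r => r - d ≤ j ∧ j ≤ r)).card
        ≤ (Finset.Icc j (j + d)).card := by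
      apply Finset.card_le_card
      intro r hrm
      simp only [Finset.mem_filter, Finset.mem_Ico, Finset.mem_Icc] at hrm ⊢
      omega
    have hc2 : (Finset.Icc j (j + d)).card = (d + 1).toNat := by
      rw [Int.card_Icc]
      congr 1
      omega
    have : (((Finset.Ico r₁ r₂).filter (fun r => r - d ≤ j ∧ j ≤ r)).card : ℝ)
        ≤ (d:ℝ) + 1 := by
      have := hcard
      rw [hc2] at this
      calc (((Finset.Ico r₁ r₂).filter (fun r => r - d ≤ j ∧ j ≤ r)).card : ℝ)
          ≤ ((d + 1).toNat : ℝ) := by exact_mod_cast this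
        _ = (d:ℝ) + 1 := by
            rw [← Int.cast_natCast, Int.toNat_of_nonneg (by omega)]
            push_cast; ring
    exact mul_le_mul_of_nonneg_right this (ha j)
  have h3 : ∑ r ∈ Finset.Ico r₁ r₂, S r
      ≤ (((d:ℝ) + 1) / s) * ∑ r ∈ Finset.Ico (r₁ - d) r₂, a r := by
    rw [div_mul_eq_mul_div, le_div_iff₀ hs, mul_comm]
    exact key
  have hd' : (0:ℝ) ≤ (d:ℝ) := by exact_mod_cast hd
  linarith
end

section
/- Let T be a finite set of blocks with a partial order ⪯ (ancestor relation) and a weight function w : T → ℝ≥0. For X ⊆ T and b ∈ T define SubTW(X, b) := ∑_{b' ∈ X, b ⪯ b'} w(b'). Fix a block b with parent p, and let Sib(b) denote the set of siblings of b (other children of p); define SibSubTW(X, b) := max_{c ∈ Sib(b)} SubTW(X, c) (equal to 0 if Sib(b) is empty). Suppose B_min ⊆ B ⊆ B_max ⊆ T, every element of a subtree of a child of p lies in the subtree of p, and the subtrees of distinct children of p are disjoint. Then SubTW(B, b) − SibSubTW(B, b) ≤ (SubTW(B_min, b) − SibSubTW(B_max, b)) + SubTW(B_max \ B_min, p). 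-/
/-- Subtree weight of `b` within the block set `X`: the total weight of blocks of `X`
in the subtree rooted at `b` (i.e. having `b` as an ancestor). -/
noncomputable def SubTW {α : Type*} [PartialOrder α] [DecidableEq α]
    [DecidableRel (α := α) (· ≤ ·)] (w : α → ℝ) (X : Finset α) (b : α) : ℝ :=
  ∑ b' ∈ X.filter (fun b' => b ≤ b'), w b'

/-- Maximum subtree weight among a finite set of sibling blocks (0 if empty). -/
noncomputable def SibSubTW {α : Type*} [PartialOrder α] [DecidableEq α]
    [DecidableRel (α := α) (· ≤ ·)] (w : α → ℝ) (X : Finset α) (Sib : Finset α) : ℝ :=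
  Sib.fold max 0 (fun c => SubTW w X c)

lemma subtw_nonneg {α : Type*} [PartialOrder α] [DecidableEq α]
    [DecidableRel (α := α) (· ≤ ·)] (w : α → ℝ) (hw : ∀ x, 0 ≤ w x)
    (X : Finset α) (b : α) : 0 ≤ SubTW w X b :=
  Finset.sum_nonneg fun x _ => hw x

lemma subtw_mono {α : Type*} [PartialOrder α] [DecidableEq α]
    [DecidableRel (α := α) (· ≤ ·)] (w : α → ℝ) (hw : ∀ x, 0 ≤ w x)
    {X Y : Finset α} (h : X ⊆ Y) (b : α) : SubTW w X b ≤ SubTW w Y b :=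
  Finset.sum_le_sum_of_subset_of_nonneg (Finset.filter_subset_filter _ h)
    (fun x _ _ => hw x)

lemma subtw_split {α : Type*} [PartialOrder α] [DecidableEq α]
    [DecidableRel (α := α) (· ≤ ·)] (w : α → ℝ)
    {X Y : Finset α} (h : X ⊆ Y) (b : α) :
    SubTW w Y b = SubTW w X b + SubTW w (Y \ X) b := by
  unfold SubTW
  rw [← Finset.sum_union]
  · congr 1
    rw [← Finset.filter_union, Finset.union_sdiff_of_subset h]
  · exact Finset.disjoint_filter_filter (Finset.disjoint_sdiff)

/-- Subtrees of two distinct children together weigh at most the parent's subtree. -/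
lemma subtw_two_children {α : Type*} [PartialOrder α] [DecidableEq α]
    [DecidableRel (α := α) (· ≤ ·)] (w : α → ℝ) (hw : ∀ x, 0 ≤ w x)
    (X : Finset α) (b c p : α)
    (hb : ∀ x, b ≤ x → p ≤ x) (hc : ∀ x, c ≤ x → p ≤ x)
    (hdis : ∀ x, b ≤ x → ¬ c ≤ x) :
    SubTW w X b + SubTW w X c ≤ SubTW w X p := by
  unfold SubTW
  rw [← Finset.sum_union]
  · apply Finset.sum_le_sum_of_subset_of_nonneg _ (fun x _ _ => hw x)
    intro x hx
    rw [Finset.mem_union, Finset.mem_filter, Finset.mem_filter] at hx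
    rw [Finset.mem_filter]
    rcases hx with ⟨h1, h2⟩ | ⟨h1, h2⟩
    · exact ⟨h1, hb x h2⟩
    · exact ⟨h1, hc x h2⟩
  · apply Finset.disjoint_filter_filter'
    rw [disjoint_iff_inf_le]
    intro x hx
    exact absurd (hx.2) (hdis x hx.1)

/-- GHAST sandwich lemma for the subtree-weight advantage: for `B_min ⊆ B ⊆ B_max`,
with nonnegative weights, subtrees of children of `p` contained in the subtree of `p`,
and disjoint subtrees of distinct children,
`SubTW(B,b) - SibSubTW(B,b) ≤ (SubTW(B_min,b) - SibSubTW(B_max,b)) + SubTW(B_max \ B_min, p)`. -/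
theorem stmt15 {α : Type*} [PartialOrder α] [DecidableEq α]
    [DecidableRel (α := α) (· ≤ ·)]
    (w : α → ℝ) (hw : ∀ x, 0 ≤ w x)
    (Bmin B Bmax : Finset α) (hsub1 : Bmin ⊆ B) (hsub2 : B ⊆ Bmax)
    (b p : α) (Sib : Finset α) (hbSib : b ∉ Sib)
    (hchild : ∀ c ∈ insert b Sib, ∀ x, c ≤ x → p ≤ x)
    (hdisj : ∀ c₁ ∈ insert b Sib, ∀ c₂ ∈ insert b Sib, c₁ ≠ c₂ →
      ∀ x, c₁ ≤ x → ¬ c₂ ≤ x) :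
    SubTW w B b - SibSubTW w B Sib ≤
      (SubTW w Bmin b - SibSubTW w Bmax Sib) + SubTW w (Bmax \ Bmin) p := by
  have hsub13 : Bmin ⊆ Bmax := hsub1.trans hsub2
  have hbmem : b ∈ insert b Sib := Finset.mem_insert_self _ _
  have h1 : SubTW w B b ≤ SubTW w Bmin b + SubTW w (Bmax \ Bmin) b := by
    calc SubTW w B b ≤ SubTW w Bmax b := subtw_mono w hw hsub2 b
    _ = _ := subtw_split w hsub13 b
  rcases Sib.eq_empty_or_nonempty with hS | hS
  · subst hS
    have h2 : SubTW w (Bmax \ Bmin) b ≤ SubTW w (Bmax \ Bmin) p := by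
      apply Finset.sum_le_sum_of_subset_of_nonneg _ (fun x _ _ => hw x)
      apply Finset.monotone_filter_right
      intro x _ hx
      exact hchild b hbmem x hx
    simp only [SibSubTW, Finset.fold_empty, sub_zero]
    linarith
  · obtain ⟨c, hc, hcmax⟩ := Finset.exists_max_image Sib (fun c => SubTW w Bmax c) hS
    have hcmem : c ∈ insert b Sib := Finset.mem_insert_of_mem hc
    have hbc : b ≠ c := fun h => hbSib (h ▸ hc)
    have hfold_le : SibSubTW w Bmax Sib ≤ SubTW w Bmax c := by
      rw [SibSubTW, Finset.fold_max_le]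
      exact ⟨subtw_nonneg w hw _ _, fun x hx => hcmax x hx⟩
    have hle_fold : SubTW w B c ≤ SibSubTW w B Sib := by
      rw [SibSubTW, Finset.le_fold_max]
      exact Or.inr ⟨c, hc, le_refl _⟩
    have hsplit : SubTW w Bmax c = SubTW w B c + SubTW w (Bmax \ B) c :=
      subtw_split w hsub2 c
    have hmono : SubTW w (Bmax \ B) c ≤ SubTW w (Bmax \ Bmin) c :=
      subtw_mono w hw (Finset.sdiff_subset_sdiff (le_refl _) hsub1) c
    have htwo : SubTW w (Bmax \ Bmin) b + SubTW w (Bmax \ Bmin) c ≤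
        SubTW w (Bmax \ Bmin) p :=
      subtw_two_children w hw _ b c p (hchild b hbmem) (hchild c hcmem)
        (hdisj b hbmem c hcmem hbc)
    linarith
end
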